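/- Let B_w be a bounded bilateral weighted backward shift on ℓ^p(ℤ), 1 ≤ p < ∞. If there exist x ∈ ℓ^p(ℤ) and a nonzero y ∈ ℓ^p(ℤ) such that y is a limit point of the orbit (B_w^n x)_{n≥0}, then for every p₀ ≥ 0 and every ε > 0 there exists n ≥ p₀ such that ∏_{ν=1}^{p₀+n} |w_ν| > 1/ε and ∏_{ν=p₀−n+1}^{0} |w_ν| < ε. -/

import Mathlib

/-!
Iterating the shift gives `|(B_w^m u)_k| = (∏_{k < ν ≤ k+m} |w_ν|) |u_{k+m}|`. Fix `q` with
`y_q ≠ 0`. Reading this at `k = q`, `u = x`: the left side tends to `|y_q| > 0` along `n_j`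
while `x_{q+n_j} → 0`, so `∏_{q < ν ≤ q+n_j} |w_ν| → ∞`. Reading it at `k = q - (n_j - n_b)`,
`u = B_w^{n_b} x`, with `b` fixed so that `(B_w^{n_b} x)_q ≠ 0`: convergence in `ℓ^p` is
uniform in the coordinate and `y_k → 0` as `k → -∞`, so the left side tends to `0` and
`∏_{q-(n_j-n_b) < ν ≤ q} |w_ν| → 0`. Moving a fixed endpoint of these products to `0` only
multiplies them by a positive constant, and lowering the left endpoint by `L` multiplies it by
at most `C^L`; since `b` may be taken as large as we like, both windows can be made to be
`(0, p₀+n]` and `(p₀-n, 0]` for one and the same `n`.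
-/

open Filter Topology Finset
open scoped ENNReal

def weightedShift (w z : ℤ → ℝ) (k : ℤ) : ℝ := w (k + 1) * z (k + 1)

noncomputable def weightProd (w : ℤ → ℝ) (a b : ℤ) : ℝ := ∏ ν ∈ Ioc a b, |w ν|

section WeightProd

variable {w : ℤ → ℝ}

lemma weightProd_pos (hw : ∀ k, w k ≠ 0) (a b : ℤ) : 0 < weightProd w a b :=
  prod_pos fun k _ => abs_pos.2 (hw k)

lemma weightProd_nonneg (a b : ℤ) : 0 ≤ weightProd w a b :=
  prod_nonneg fun _ _ => abs_nonneg _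

lemma weightProd_mul_weightProd {a b c : ℤ} (hab : a ≤ b) (hbc : b ≤ c) :
    weightProd w a b * weightProd w b c = weightProd w a c := by
  rw [weightProd, weightProd, weightProd, ← prod_union (Ioc_disjoint_Ioc_of_le le_rfl),
    Ioc_union_Ioc_eq_Ioc hab hbc]

lemma weightProd_add_one {a b : ℤ} (hab : a ≤ b) :
    weightProd w a (b + 1) = weightProd w a b * |w (b + 1)| := by
  rw [weightProd, ← insert_Ioc_right_eq_Ioc_add_one hab, prod_insert (by simp), mul_comm]
  rfl

lemma weightProd_le_pow {C : ℝ} (hC : ∀ k, |w k| ≤ C) (a b : ℤ) :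
    weightProd w a b ≤ C ^ (b - a).toNat := by
  calc weightProd w a b ≤ ∏ _ν ∈ Ioc a b, C :=
        prod_le_prod (fun _ _ => abs_nonneg _) fun k _ => hC k
    _ = C ^ (b - a).toNat := by rw [prod_const, Int.card_Ioc]

lemma abs_weightedShift_iterate_apply (m : ℕ) (u : ℤ → ℝ) (k : ℤ) :
    |(weightedShift w)^[m] u k| = weightProd w k (k + m) * |u (k + m)| := by
  induction m generalizing u with
  | zero => simp [weightProd]
  | succ m ih =>
    rw [Function.iterate_succ_apply, ih, weightedShift, abs_mul, Nat.cast_succ, ← add_assoc,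
      weightProd_add_one (by omega), mul_assoc]

variable {ι : Type*} {l : Filter ι}

lemma tendsto_weightProd_atTop_left (hw : ∀ k, w k ≠ 0) {a : ℤ} {e : ι → ℤ}
    (he : Tendsto e l atTop) (h : Tendsto (fun j => weightProd w a (e j)) l atTop) (a' : ℤ) :
    Tendsto (fun j => weightProd w a' (e j)) l atTop := by
  set m := min a a'
  have hK : 0 < weightProd w m a / weightProd w m a' :=
    div_pos (weightProd_pos hw _ _) (weightProd_pos hw _ _)
  refine (h.const_mul_atTop hK).congr' ?_
  filter_upwards [he.eventually_ge_atTop (max a a')] with j hj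
  rw [div_mul_eq_mul_div, div_eq_iff (weightProd_pos hw _ _).ne',
    weightProd_mul_weightProd (min_le_left a a') (le_of_max_le_left hj),
    mul_comm, weightProd_mul_weightProd (min_le_right a a') (le_of_max_le_right hj)]

lemma tendsto_weightProd_zero_right (hw : ∀ k, w k ≠ 0) {b : ℤ} {s : ι → ℤ}
    (hs : Tendsto s l atBot) (h : Tendsto (fun j => weightProd w (s j) b) l (𝓝 0)) (b' : ℤ) :
    Tendsto (fun j => weightProd w (s j) b') l (𝓝 0) := by
  set M := max b b'
  have hK := h.mul_const (weightProd w b M / weightProd w b' M)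
  rw [zero_mul] at hK
  refine hK.congr' ?_
  filter_upwards [hs.eventually_le_atBot (min b b')] with j hj
  rw [← mul_div_assoc, div_eq_iff (weightProd_pos hw _ _).ne',
    weightProd_mul_weightProd (le_of_le_min_left hj) (le_max_left b b'),
    weightProd_mul_weightProd (le_of_le_min_right hj) (le_max_right b b')]

lemma tendsto_weightProd_zero_sub_left {C : ℝ} (hC : ∀ k, |w k| ≤ C) {b : ℤ} {s : ι → ℤ}
    (hs : ∀ᶠ j in l, s j ≤ b) (h : Tendsto (fun j => weightProd w (s j) b) l (𝓝 0)) (L : ℕ) :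
    Tendsto (fun j => weightProd w (s j - L) b) l (𝓝 0) := by
  have hK := h.const_mul (C ^ L)
  rw [mul_zero] at hK
  refine squeeze_zero' (Eventually.of_forall fun j => weightProd_nonneg _ _) ?_ hK
  filter_upwards [hs] with j hj
  rw [← weightProd_mul_weightProd (by omega : s j - L ≤ s j) hj]
  refine mul_le_mul_of_nonneg_right ?_ (weightProd_nonneg _ _)
  simpa using weightProd_le_pow hC (s j - L) (s j)

end WeightProd

section Lp

variable {α ι : Type*} {l : Filter ι} {p : ℝ}

lemma memℓp_ofReal_iff (hp : 0 < p) {f : α → ℝ} :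
    Memℓp f (ENNReal.ofReal p) ↔ Summable fun k => |f k| ^ p := by
  have hp' : 0 < (ENNReal.ofReal p).toReal := by rwa [ENNReal.toReal_ofReal hp.le]
  simp only [memℓp_gen_iff hp', ENNReal.toReal_ofReal hp.le, Real.norm_eq_abs]

lemma tendsto_cofinite_zero_of_summable_abs_rpow (hp : 0 < p) {f : α → ℝ}
    (hf : Summable fun k => |f k| ^ p) : Tendsto f cofinite (𝓝 0) := by
  rw [tendsto_zero_iff_abs_tendsto_zero]
  have := hf.tendsto_cofinite_zero.rpow_const (p := p⁻¹) (Or.inr (inv_nonneg.2 hp.le))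
  simpa [Function.comp_def, Real.rpow_rpow_inv (abs_nonneg _) hp.ne',
    Real.zero_rpow (inv_ne_zero hp.ne')] using this

lemma tendsto_apply_of_tendsto_tsum_abs_rpow (hp : 0 < p) {g : ι → α → ℝ}
    (hg : ∀ j, Summable fun k => |g j k| ^ p)
    (h : Tendsto (fun j => ∑' k, |g j k| ^ p) l (𝓝 0)) (a : ι → α) :
    Tendsto (fun j => g j (a j)) l (𝓝 0) := by
  have h' := h.rpow_const (p := p⁻¹) (Or.inr (inv_nonneg.2 hp.le))
  rw [Real.zero_rpow (inv_ne_zero hp.ne')] at h'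
  refine squeeze_zero_norm (fun j => ?_) h'
  calc ‖g j (a j)‖ = (|g j (a j)| ^ p) ^ p⁻¹ := by
        rw [Real.norm_eq_abs, Real.rpow_rpow_inv (abs_nonneg _) hp.ne']
    _ ≤ (∑' k, |g j k| ^ p) ^ p⁻¹ :=
        Real.rpow_le_rpow (by positivity) ((hg j).le_tsum _ fun _ _ => by positivity)
          (inv_nonneg.2 hp.le)

lemma tendsto_atTop_of_tendsto_mul {f g : ι → ℝ} {c : ℝ} (hc : 0 < c) (hf : ∀ j, 0 ≤ f j)
    (hg : Tendsto g l (𝓝 0)) (hfg : Tendsto (fun j => f j * g j) l (𝓝 c)) :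
    Tendsto f l atTop := by
  have hg0 : ∀ᶠ j in l, 0 < g j :=
    (hfg.eventually (lt_mem_nhds hc)).mono fun j hj => pos_of_mul_pos_right hj (hf j)
  have hg' : Tendsto g l (𝓝[>] 0) := tendsto_nhdsWithin_iff.2 ⟨hg, hg0⟩
  refine (hfg.pos_mul_atTop hc hg'.inv_tendsto_nhdsGT_zero).congr' ?_
  filter_upwards [hg0] with j hj
  simp [hj.ne']

end Lp

section Memℓp

variable {p : ℝ≥0∞} {w : ℤ → ℝ} {C : ℝ}

lemma Memℓp.comp_add_right (hp : 0 < p.toReal) {z : ℤ → ℝ} (hz : Memℓp z p) (m : ℤ) :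
    Memℓp (fun k => z (k + m)) p := by
  rw [memℓp_gen_iff hp] at hz ⊢
  exact (Equiv.addRight m).summable_iff.2 hz

lemma memℓp_weightedShift (hp : 0 < p.toReal) (hC : ∀ k, |w k| ≤ C) {z : ℤ → ℝ}
    (hz : Memℓp z p) : Memℓp (weightedShift w z) p :=
  ((hz.comp_add_right hp 1).const_mul C).mono' fun k => by
    simp only [weightedShift, Real.norm_eq_abs, abs_mul]
    exact mul_le_mul_of_nonneg_right ((hC _).trans (le_abs_self C)) (abs_nonneg _)

lemma memℓp_weightedShift_iterate (hp : 0 < p.toReal) (hC : ∀ k, |w k| ≤ C) {z : ℤ → ℝ}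
    (hz : Memℓp z p) (m : ℕ) : Memℓp ((weightedShift w)^[m] z) p := by
  induction m with
  | zero => exact hz
  | succ m ih => rw [Function.iterate_succ_apply']; exact memℓp_weightedShift hp hC ih

end Memℓp

section Orbit

variable {p : ℝ} {w : ℤ → ℝ} {x y : ℤ → ℝ} {n : ℕ → ℕ} {q : ℤ}

lemma tendsto_weightProd_atTop_of_tendsto_orbit (hp : 0 < p) (hw : ∀ k, w k ≠ 0)
    (hx : Summable fun k => |x k| ^ p) (hn : Tendsto n atTop atTop) {c : ℝ} (hc : c ≠ 0)
    (hconv : Tendsto (fun j => (weightedShift w)^[n j] x q) atTop (𝓝 c)) :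
    Tendsto (fun j => weightProd w 0 (q + n j)) atTop atTop := by
  have he : Tendsto (fun j => q + (n j : ℤ)) atTop atTop :=
    tendsto_atTop_add_const_left _ q (tendsto_natCast_atTop_atTop.comp hn)
  have hx0 : Tendsto (fun j => |x (q + n j)|) atTop (𝓝 0) := by
    simpa using ((tendsto_cofinite_zero_of_summable_abs_rpow hp hx).comp
      (he.mono_right atTop_le_cofinite)).abs
  refine tendsto_weightProd_atTop_left (a := q) hw he ?_ 0
  refine tendsto_atTop_of_tendsto_mul (abs_pos.2 hc) (fun j => weightProd_nonneg _ _) hx0 ?_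
  simpa only [abs_weightedShift_iterate_apply] using hconv.abs

lemma tendsto_weightProd_zero_of_tendsto_orbit (hp : 0 < p) (hw : ∀ k, w k ≠ 0) {C : ℝ}
    (hC : ∀ k, |w k| ≤ C) (hy : Summable fun k => |y k| ^ p) (hn : Tendsto n atTop atTop)
    (hq : y q ≠ 0)
    (hconv : ∀ a : ℕ → ℤ,
      Tendsto (fun j => (weightedShift w)^[n j] x (a j) - y (a j)) atTop (𝓝 0))
    (r : ℤ) : Tendsto (fun j => weightProd w (r - n j) 0) atTop (𝓝 0) := by
  have hnq : Tendsto (fun j => (weightedShift w)^[n j] x q) atTop (𝓝 (y q)) := by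
    simpa using (hconv fun _ => q).add_const (y q)
  obtain ⟨b, hb0, hbr⟩ := ((hnq.eventually_ne hq).and
    (hn.eventually_ge_atTop (r - q).toNat)).exists
  set a : ℕ → ℤ := fun j => q + n b - n j with ha_def
  have ha : Tendsto a atTop atBot := by
    simpa [ha_def, sub_eq_add_neg] using tendsto_atBot_add_const_left _ (q + n b)
      (tendsto_neg_atTop_atBot.comp (tendsto_natCast_atTop_atTop.comp hn))
  have horbit : Tendsto (fun j => (weightedShift w)^[n j] x (a j)) atTop (𝓝 0) := by
    simpa using (hconv a).add ((tendsto_cofinite_zero_of_summable_abs_rpow hp hy).comp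
      (ha.mono_right atBot_le_cofinite))
  have hW : Tendsto (fun j => weightProd w (a j) q) atTop (𝓝 0) := by
    have := horbit.abs.div_const |(weightedShift w)^[n b] x q|
    rw [abs_zero, zero_div] at this
    refine this.congr' ?_
    filter_upwards [hn.eventually_ge_atTop (n b)] with j hj
    obtain ⟨d, hd⟩ := Nat.exists_eq_add_of_le hj
    have had : a j + d = q := by simp [ha_def, hd]; ring
    rw [div_eq_iff (abs_pos.2 hb0).ne', hd, add_comm, Function.iterate_add_apply,
      abs_weightedShift_iterate_apply, had]
  have := tendsto_weightProd_zero_sub_left hC (ha.eventually_le_atBot 0)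
    (tendsto_weightProd_zero_right hw ha hW 0) (q + n b - r).toNat
  refine this.congr fun j => ?_
  congr 1
  simp only [ha_def]
  omega

end Orbit

theorem stmt13 (p : ℝ) (hp : 1 ≤ p) (w : ℤ → ℝ) (hw0 : ∀ k, w k ≠ 0)
    (C : ℝ) (hbd : ∀ k, |w k| ≤ C)
    (Bw : (ℤ → ℝ) → (ℤ → ℝ)) (hBw : Bw = fun z k => w (k + 1) * z (k + 1))
    (x y : ℤ → ℝ)
    (hx : Summable fun k => |x k| ^ p) (hy : Summable fun k => |y k| ^ p)
    (hy0 : y ≠ 0)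
    -- y is a limit point of the orbit of x under B_w
    (hlim : ∃ n : ℕ → ℕ, StrictMono n ∧
      Tendsto (fun j => ∑' k : ℤ, |Bw^[n j] x k - y k| ^ p) atTop (nhds 0)) :
    ∀ p₀ : ℕ, ∀ ε : ℝ, 0 < ε → ∃ n : ℕ, p₀ ≤ n ∧
      (∏ ν ∈ Finset.Icc (1 : ℤ) ((p₀ : ℤ) + n), |w ν|) > 1 / ε ∧
      (∏ ν ∈ Finset.Icc ((p₀ : ℤ) - n + 1) 0, |w ν|) < ε := by
  subst hBw
  intro p₀ ε hε
  obtain ⟨n, hn, hlim⟩ := hlim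
  obtain ⟨q, hq⟩ := Function.ne_iff.1 hy0
  have hp0 : 0 < p := by linarith
  have hp' : 0 < (ENNReal.ofReal p).toReal := by rwa [ENNReal.toReal_ofReal hp0.le]
  have hdiff (j : ℕ) : Summable fun k => |(weightedShift w)^[n j] x k - y k| ^ p :=
    (memℓp_ofReal_iff hp0).1 ((memℓp_weightedShift_iterate hp' hbd
      ((memℓp_ofReal_iff hp0).2 hx) (n j)).sub ((memℓp_ofReal_iff hp0).2 hy))
  have hconv := tendsto_apply_of_tendsto_tsum_abs_rpow hp0 hdiff hlim
  have hF := tendsto_weightProd_atTop_of_tendsto_orbit hp0 hw0 hx hn.tendsto_atTop hq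
    (by simpa using (hconv fun _ => q).add_const (y q))
  have hB := tendsto_weightProd_zero_of_tendsto_orbit hp0 hw0 hbd hy hn.tendsto_atTop hq hconv
    (2 * p₀ - q)
  obtain ⟨j, hjF, hjB, hj⟩ := ((hF.eventually_gt_atTop (1 / ε)).and
    ((hB.eventually (gt_mem_nhds hε)).and
      (hn.tendsto_atTop.eventually_ge_atTop (2 * p₀ - q).toNat))).exists
  refine ⟨(q + n j - p₀).toNat, by omega, hjF.trans_eq ?_, Eq.trans_lt ?_ hjB⟩ <;>
  · refine prod_congr (ext fun ν => ?_) fun _ _ => rfl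
    simp only [mem_Icc, mem_Ioc]
    omega
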